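/- Let B, C ∈ B(H). Then w([[0, B], [C, 0]])² ≥ (1/(4√2))·[ ‖B + C*‖⁴ + ‖B − C*‖⁴ ]^(1/2) ≥ (1/4)·max{ ‖|B|² + |C*|²‖, ‖|B*|² + |C|²‖ }. -/

import Mathlib

open ContinuousLinearMap

variable {H : Type*} [NormedAddCommGroup H] [InnerProductSpace ℂ H] [CompleteSpace H]

/-- The numerical radius of a bounded linear operator:
`w(T) = sup { |⟨Tx, x⟩| : ‖x‖ = 1 }`. -/
noncomputable def numRadius {E : Type*} [NormedAddCommGroup E] [InnerProductSpace ℂ E]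
    (T : E →L[ℂ] E) : ℝ :=
  sSup {r : ℝ | ∃ x : E, ‖x‖ = 1 ∧ r = ‖(inner ℂ (T x) x : ℂ)‖}

/-- The absolute value `|T| = (T*T)^(1/2)` of a bounded linear operator.
Note `opAbs (adjoint T) = (T T*)^(1/2) = |T*|`. -/
noncomputable def opAbs (T : H →L[ℂ] H) : H →L[ℂ] H := CFC.sqrt (adjoint T * T)

/-- The off-diagonal operator matrix `[[0, B], [C, 0]]` acting on `H ⊕ H`
(with the Hilbert space structure `WithLp 2 (H × H)`) by `(x₁, x₂) ↦ (B x₂, C x₁)`. -/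
noncomputable def offDiag (B C : H →L[ℂ] H) :
    WithLp 2 (H × H) →L[ℂ] WithLp 2 (H × H) :=
  ((WithLp.prodContinuousLinearEquiv 2 ℂ H H).symm : (H × H) →L[ℂ] WithLp 2 (H × H)).comp
    (((B.comp (ContinuousLinearMap.snd ℂ H H)).prod
        (C.comp (ContinuousLinearMap.fst ℂ H H))).comp
      ((WithLp.prodContinuousLinearEquiv 2 ℂ H H) : WithLp 2 (H × H) →L[ℂ] H × H))

/-!
Evaluating `T = [[0, B], [C, 0]]` on `(x, y)` gives `|⟪B y, x⟫ + ⟪C x, y⟫| ≤ w(T) (‖x‖² + ‖y‖²)`.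
The real part of the left-hand side is `re ⟪(B + C*) y, x⟫`, and after replacing `x` by `i x` it
becomes `re ⟪(B - C*) y, x⟫`; hence `‖B ± C*‖ ≤ 2 w(T)`, which is the first inequality.
For the second, the parallelogram identity
`(B + C*)* (B + C*) + (B - C*)* (B - C*) = 2 (|B|² + |C*|²)` and the C*-identity `‖S* S‖ = ‖S‖²`
give `‖|B|² + |C*|²‖ ≤ (‖B + C*‖² + ‖B - C*‖²) / 2`, and `(p + q)² ≤ 2 (p² + q²)` finishes.
-/

open scoped InnerProductSpace

lemma sqrt_pow_four_add_pow_four_le {a b M : ℝ} (ha : 0 ≤ a) (hb : 0 ≤ b) (haM : a ≤ M)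
    (hbM : b ≤ M) : √(a ^ 4 + b ^ 4) ≤ √2 * M ^ 2 := by
  rw [← Real.sqrt_sq (by positivity : 0 ≤ M ^ 2), ← Real.sqrt_mul zero_le_two]
  gcongr
  nlinarith [pow_le_pow_left₀ ha haM 4, pow_le_pow_left₀ hb hbM 4]

lemma sq_add_sq_le_sqrt_two_mul_sqrt (a b : ℝ) : a ^ 2 + b ^ 2 ≤ √2 * √(a ^ 4 + b ^ 4) := by
  rw [← Real.sqrt_mul zero_le_two]
  exact Real.le_sqrt_of_sq_le (by nlinarith [sq_nonneg (a ^ 2 - b ^ 2)])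

section CStarAlgebra

variable {A : Type*} [NonUnitalCStarAlgebra A]

lemma two_mul_norm_star_mul_self_add_mul_star_le (a c : A) :
    2 * ‖star a * a + c * star c‖ ≤ ‖a + star c‖ ^ 2 + ‖a - star c‖ ^ 2 := by
  have parallelogram : star (a + star c) * (a + star c) + star (a - star c) * (a - star c)
      = (2 : ℂ) • (star a * a + c * star c) := by
    simp only [star_add, star_sub, star_star, two_smul]; noncomm_ring
  calc 2 * ‖star a * a + c * star c‖
      = ‖star (a + star c) * (a + star c) + star (a - star c) * (a - star c)‖ := by
        rw [parallelogram, norm_smul, Complex.norm_ofNat]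
    _ ≤ ‖a + star c‖ ^ 2 + ‖a - star c‖ ^ 2 := by
        rw [sq, sq, ← CStarRing.norm_star_mul_self, ← CStarRing.norm_star_mul_self]
        exact norm_add_le _ _

lemma two_mul_norm_mul_star_add_star_mul_le (a c : A) :
    2 * ‖a * star a + star c * c‖ ≤ ‖a + star c‖ ^ 2 + ‖a - star c‖ ^ 2 := by
  have h := two_mul_norm_star_mul_self_add_mul_star_le (star a) (star c)
  rwa [star_star, star_star, ← norm_star (star a + c), ← norm_star (star a - c), star_add,
    star_sub, star_star] at h

end CStarAlgebra

section OffDiagonal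

variable {E : Type*} [NormedAddCommGroup E] [InnerProductSpace ℂ E]

lemma numRadius_nonneg (T : E →L[ℂ] E) : 0 ≤ numRadius T :=
  Real.sSup_nonneg <| by rintro r ⟨x, -, rfl⟩; positivity

lemma norm_inner_le_numRadius {T : E →L[ℂ] E} {x : E} (hx : ‖x‖ = 1) :
    ‖⟪T x, x⟫_ℂ‖ ≤ numRadius T := by
  refine le_csSup ⟨‖T‖, ?_⟩ ⟨x, hx, rfl⟩
  rintro r ⟨y, hy, rfl⟩
  calc ‖⟪T y, y⟫_ℂ‖ ≤ ‖T y‖ * ‖y‖ := norm_inner_le_norm _ _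
    _ ≤ ‖T‖ * ‖y‖ * ‖y‖ := by gcongr; exact T.le_opNorm y
    _ = ‖T‖ := by rw [hy, mul_one, mul_one]

lemma norm_inner_le_numRadius_mul_sq (T : E →L[ℂ] E) (x : E) :
    ‖⟪T x, x⟫_ℂ‖ ≤ numRadius T * ‖x‖ ^ 2 := by
  rcases eq_or_ne x 0 with rfl | hx
  · simp
  have hx' : ‖x‖ ≠ 0 := norm_ne_zero_iff.2 hx
  have hu : ‖((‖x‖⁻¹ : ℝ) : ℂ) • x‖ = 1 := by simp [norm_smul, hx']
  have h := norm_inner_le_numRadius (T := T) hu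
  rw [map_smul, inner_smul_left, inner_smul_right, norm_mul, norm_mul] at h
  simp only [Complex.conj_ofReal, Complex.norm_real, norm_inv, norm_norm] at h
  calc ‖⟪T x, x⟫_ℂ‖ = ‖x‖ ^ 2 * (‖x‖⁻¹ * (‖x‖⁻¹ * ‖⟪T x, x⟫_ℂ‖)) := by field_simp
    _ ≤ ‖x‖ ^ 2 * numRadius T := by gcongr
    _ = numRadius T * ‖x‖ ^ 2 := mul_comm _ _


lemma inner_offDiag_toLp (B C : E →L[ℂ] E) (x y : E) :
    ⟪offDiag B C (WithLp.toLp 2 (x, y)), WithLp.toLp 2 (x, y)⟫_ℂ = ⟪B y, x⟫_ℂ + ⟪C x, y⟫_ℂ :=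
  rfl

lemma norm_inner_add_inner_le_numRadius_offDiag (B C : E →L[ℂ] E) (x y : E) :
    ‖⟪B y, x⟫_ℂ + ⟪C x, y⟫_ℂ‖ ≤ numRadius (offDiag B C) * (‖x‖ ^ 2 + ‖y‖ ^ 2) := by
  simpa only [inner_offDiag_toLp, WithLp.prod_norm_sq_eq_of_L2, WithLp.toLp_fst,
    WithLp.toLp_snd]
    using norm_inner_le_numRadius_mul_sq (offDiag B C) (WithLp.toLp 2 (x, y))

end OffDiagonal

lemma opAbs_sq (T : H →L[ℂ] H) : opAbs T ^ 2 = adjoint T * T :=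
  CFC.sq_sqrt _ (by rw [← star_eq_adjoint]; exact star_mul_self_nonneg T)

open RCLike in
lemma norm_add_adjoint_le_two_mul_numRadius (B C : H →L[ℂ] H) :
    ‖B + adjoint C‖ ≤ 2 * numRadius (offDiag B C) := by
  have hw := numRadius_nonneg (offDiag B C)
  refine opNorm_le_of_re_inner_le (by positivity) fun x y hx hy ↦ ?_
  have h := norm_inner_add_inner_le_numRadius_offDiag B C y x
  calc re ⟪(B + adjoint C) x, y⟫_ℂ = re (⟪B x, y⟫_ℂ + ⟪C y, x⟫_ℂ) := by
        rw [add_apply, inner_add_left, adjoint_inner_left, map_add, map_add, inner_re_symm x]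
    _ ≤ ‖⟪B x, y⟫_ℂ + ⟪C y, x⟫_ℂ‖ := re_le_norm _
    _ ≤ 2 * numRadius (offDiag B C) := by rw [hx, hy] at h; linarith

open RCLike in
lemma norm_sub_adjoint_le_two_mul_numRadius (B C : H →L[ℂ] H) :
    ‖B - adjoint C‖ ≤ 2 * numRadius (offDiag B C) := by
  have hw := numRadius_nonneg (offDiag B C)
  refine opNorm_le_of_re_inner_le (by positivity) fun x y hx hy ↦ ?_
  have h := norm_inner_add_inner_le_numRadius_offDiag B C (Complex.I • y) x
  have hrot : ⟪B x, Complex.I • y⟫_ℂ + ⟪C (Complex.I • y), x⟫_ℂ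
      = Complex.I * (⟪B x, y⟫_ℂ - ⟪C y, x⟫_ℂ) := by
    rw [map_smul, inner_smul_left, inner_smul_right, Complex.conj_I]; ring
  calc re ⟪(B - adjoint C) x, y⟫_ℂ = re (⟪B x, y⟫_ℂ - ⟪C y, x⟫_ℂ) := by
        rw [sub_apply, inner_sub_left, adjoint_inner_left, map_sub, map_sub, inner_re_symm x]
    _ ≤ ‖⟪B x, y⟫_ℂ - ⟪C y, x⟫_ℂ‖ := re_le_norm _
    _ ≤ 2 * numRadius (offDiag B C) := by
      rw [hrot, norm_mul, Complex.norm_I, one_mul, norm_smul, Complex.norm_I, one_mul, hx,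
        hy] at h
      linarith

theorem stmt_10 (B C : H →L[ℂ] H) :
    (1 / (4 * Real.sqrt 2)) * Real.sqrt (‖B + adjoint C‖ ^ 4 + ‖B - adjoint C‖ ^ 4) ≤
      numRadius (offDiag B C) ^ 2 ∧
    (1 / 4) * max ‖opAbs B ^ 2 + opAbs (adjoint C) ^ 2‖ ‖opAbs (adjoint B) ^ 2 + opAbs C ^ 2‖ ≤
      (1 / (4 * Real.sqrt 2)) * Real.sqrt (‖B + adjoint C‖ ^ 4 + ‖B - adjoint C‖ ^ 4) := by
  have hsq2 : √2 ^ 2 = 2 := Real.sq_sqrt zero_le_two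
  constructor
  · calc 1 / (4 * √2) * √(‖B + adjoint C‖ ^ 4 + ‖B - adjoint C‖ ^ 4)
        ≤ 1 / (4 * √2) * (√2 * (2 * numRadius (offDiag B C)) ^ 2) := by
          gcongr
          exact sqrt_pow_four_add_pow_four_le (norm_nonneg _) (norm_nonneg _)
            (norm_add_adjoint_le_two_mul_numRadius B C)
            (norm_sub_adjoint_le_two_mul_numRadius B C)
      _ = numRadius (offDiag B C) ^ 2 := by field_simp; ring
  · have h₁ := two_mul_norm_star_mul_self_add_mul_star_le B C
    have h₂ := two_mul_norm_mul_star_add_star_mul_le B C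
    simp only [star_eq_adjoint] at h₁ h₂
    simp only [opAbs_sq, adjoint_adjoint]
    have hsum := sq_add_sq_le_sqrt_two_mul_sqrt ‖B + adjoint C‖ ‖B - adjoint C‖
    calc 1 / 4 * max ‖adjoint B * B + C * adjoint C‖ ‖B * adjoint B + adjoint C * C‖
        ≤ 1 / 4 * ((‖B + adjoint C‖ ^ 2 + ‖B - adjoint C‖ ^ 2) / 2) := by
          gcongr
          exact max_le (by linarith) (by linarith)
      _ ≤ 1 / 4 * (√2 * √(‖B + adjoint C‖ ^ 4 + ‖B - adjoint C‖ ^ 4) / 2) := by gcongr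
      _ = 1 / (4 * √2) * √(‖B + adjoint C‖ ^ 4 + ‖B - adjoint C‖ ^ 4) := by
          field_simp; rw [hsq2]; ring
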